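/- Let 1 ≤ i ≤ m−1 and suppose v_2(i) < v_2(m), where v_2 denotes the 2-adic valuation. Then for F : F_{2^n} → F_{2^n} defined by F(x) = x^{2^m+1} + x^{2^i+1}, the number of a ∈ F_{2^n}, a ≠ 0, for which the component function F_a is bent is not equal to 2^n − 2^m. -/

import Mathlib

/-!
For `a ≠ 0` the component `f_a x = Tr (a (x ^ (2^m+1) + x ^ (2^i+1)))` is a quadratic form whose
polar form is `Tr (a B(s, t))` with `B(s, t) = s^(2^m) t + s t^(2^m) + s^(2^i) t + s t^(2^i)`. If
`R_a` is its radical then `∑_ω W(ω)^4 = 2^(3n) |R_a|`, so `f_a` is bent iff `R_a = {0}`. Summing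
over `a` and using the nondegeneracy of the trace form, `∑_a |R_a| = #{(s, t) | B(s, t) = 0}`,
which is at least `3·2^n - 2` because `t = 0` and `t = s` always qualify.

On the other hand `R_a` is the zero set of a linearized polynomial `L_a`. A Frobenius twist of
`L_a`, or when `2i < m` a combination of two twists, is a nonzero trinomial of degree at most
`2^m`; `v₂(i) < v₂(m)` rules out `m = 3i`, the one case where its two top exponents coincide.
So `|R_a| ≤ 2^m`, and `2^n - 2^m` bent components would give
`∑_a |R_a| ≤ 2^n + (2^n - 2^m) + (2^m - 1) 2^m = 3·2^n - 2^(m+1) < 3·2^n - 2`.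
-/

open scoped Classical BigOperators

noncomputable section

/-- The finite field with `2^k` elements. -/
abbrev GF (k : ℕ) := GaloisField 2 k

noncomputable instance (k : ℕ) : Fintype (GF k) := Fintype.ofFinite _

/-- The absolute trace `Tr_{2^k/2}`, viewed as an element of `GF k`
(its values lie in the prime field `{0,1}`). -/
def atr (k : ℕ) (x : GF k) : GF k := ∑ j ∈ Finset.range k, x ^ 2 ^ j

/-- `(-1)^b` for `b ∈ {0,1} ⊆ GF k`. -/
def chi (k : ℕ) (x : GF k) : ℤ := if x = 0 then 1 else -1

/-- The Walsh transform of a Boolean-valued function `f` on `GF k`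
(`f` takes values in the prime field `{0,1}`). -/
def walsh (k : ℕ) (f : GF k → GF k) (ω : GF k) : ℤ :=
  ∑ x : GF k, chi k (f x + atr k (ω * x))

/-- The trace `Tr_{2^m/2}` of the subfield `K_m ⊆ GF (2*m)`, viewed inside `GF (2*m)`. -/
def trKm (m : ℕ) (x : GF (2*m)) : GF (2*m) := ∑ j ∈ Finset.range m, x ^ 2 ^ j

/-- The subfield `K_m = {x : x^(2^m) = x}` of `GF (2*m)`, as a finset. -/
def Km (m : ℕ) : Finset (GF (2*m)) := Finset.univ.filter (fun x => x ^ 2 ^ m = x)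

/-- `max_{a ≠ 0, ω} |W_{F_a}(ω)|` for a vectorial function `F` on `GF (2*m)`. -/
def maxAbsW (m : ℕ) (F : GF (2*m) → GF (2*m)) : ℕ :=
  Finset.sup ((Finset.univ.filter (fun a : GF (2*m) => a ≠ 0)) ×ˢ (Finset.univ : Finset (GF (2*m))))
    (fun p => (walsh (2*m) (fun x => atr (2*m) (p.1 * F x)) p.2).natAbs)

/-- The nonlinearity `N_F = 2^(n-1) - (1/2) max_{a ≠ 0, ω} |W_{F_a}(ω)|`, `n = 2m`. -/
def nlin (m : ℕ) (F : GF (2*m) → GF (2*m)) : ℚ :=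
  2 ^ (2*m - 1) - (maxAbsW m F : ℚ) / 2

open Finset

section Trace

variable {k : ℕ}

theorem card_GF (hk : k ≠ 0) : Fintype.card (GF k) = 2 ^ k := by
  rw [Fintype.card_eq_nat_card, GaloisField.card 2 k hk]

theorem pow_two_pow_self (hk : k ≠ 0) (x : GF k) : x ^ 2 ^ k = x := by
  rw [← card_GF hk, FiniteField.pow_card]

theorem pow_two_pow_pow_two_pow (hk : k ≠ 0) {b c d : ℕ} (h : b + c = k + d) (x : GF k) :
    (x ^ 2 ^ b) ^ 2 ^ c = x ^ 2 ^ d := by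
  rw [← pow_mul, ← pow_add, h, pow_add, pow_mul, pow_two_pow_self hk]

theorem pow_two_pow_pow_two_pow_self (hk : k ≠ 0) {b c : ℕ} (h : b + c = k) (x : GF k) :
    (x ^ 2 ^ b) ^ 2 ^ c = x := by
  rw [pow_two_pow_pow_two_pow hk (d := 0) (by omega), pow_zero, pow_one]

theorem atr_eq_algebraMap_trace (hk : k ≠ 0) (x : GF k) :
    atr k x = algebraMap (ZMod 2) (GF k) (Algebra.trace (ZMod 2) (GF k) x) := by
  rw [FiniteField.algebraMap_trace_eq_sum_pow, GaloisField.finrank 2 hk, Nat.card_zmod]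
  rfl

theorem atr_add (x y : GF k) : atr k (x + y) = atr k x + atr k y := by
  simp only [atr, ← sum_add_distrib, add_pow_char_pow]

theorem atr_zero : atr k 0 = 0 := by
  simp [atr]

def IsBit (x : GF k) : Prop := x = 0 ∨ x = 1

theorem IsBit.add {x y : GF k} (hx : IsBit x) (hy : IsBit y) : IsBit (x + y) := by
  rcases hx with rfl | rfl <;> rcases hy with rfl | rfl <;>
    simp [IsBit, CharTwo.add_self_eq_zero]

theorem IsBit.sq_eq {x : GF k} (hx : IsBit x) : x ^ 2 = x := by
  rcases hx with rfl | rfl <;> simp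

theorem atr_isBit (hk : k ≠ 0) (x : GF k) : IsBit (atr k x) := by
  rw [atr_eq_algebraMap_trace hk]
  generalize Algebra.trace (ZMod 2) (GF k) x = b
  obtain rfl | rfl : b = 0 ∨ b = 1 := by revert b; decide
  exacts [Or.inl (map_zero _), Or.inr (map_one _)]

theorem exists_atr_eq_one (hk : k ≠ 0) : ∃ y : GF k, atr k y = 1 := by
  obtain ⟨y, hy⟩ := Algebra.trace_surjective (ZMod 2) (GF k) 1
  exact ⟨y, by rw [atr_eq_algebraMap_trace hk, hy, map_one]⟩

theorem atr_sq (x : GF k) : atr k x ^ 2 = atr k (x ^ 2) := by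
  simp only [atr, sum_pow_char, ← pow_mul, mul_comm]

theorem atr_pow_two_pow (hk : k ≠ 0) (x : GF k) (c : ℕ) : atr k (x ^ 2 ^ c) = atr k x := by
  induction c with
  | zero => rw [pow_zero, pow_one]
  | succ c ih => rw [pow_succ, pow_mul, ← atr_sq, ih, (atr_isBit hk x).sq_eq]

theorem forall_atr_mul_eq_zero_iff (hk : k ≠ 0) {c : GF k} :
    (∀ t, atr k (t * c) = 0) ↔ c = 0 := by
  refine ⟨fun h => by_contra fun hc => ?_, fun hc t => by rw [hc, mul_zero, atr_zero]⟩
  obtain ⟨y, hy⟩ := exists_atr_eq_one hk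
  have := h (y * c⁻¹)
  rw [inv_mul_cancel_right₀ hc, hy] at this
  exact one_ne_zero this

end Trace

section Characters

variable {k : ℕ}

theorem chi_add {x y : GF k} (hx : IsBit x) (hy : IsBit y) :
    chi k (x + y) = chi k x * chi k y := by
  rcases hx with rfl | rfl <;> rcases hy with rfl | rfl <;>
    simp [chi, CharTwo.add_self_eq_zero]

theorem chi_mul_self (x : GF k) : chi k x * chi k x = 1 := by
  unfold chi; split_ifs <;> norm_num

theorem sum_chi_eq_ite (hk : k ≠ 0) (h : GF k → GF k) (hadd : ∀ x y, h (x + y) = h x + h y)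
    (hbit : ∀ x, IsBit (h x)) : ∑ x, chi k (h x) = if ∀ x, h x = 0 then 2 ^ k else 0 := by
  split_ifs with hzero
  · simp [chi, hzero, card_GF hk]
  · push Not at hzero
    obtain ⟨x₀, hx₀⟩ := hzero
    have hflip : ∀ x, chi k (h (x + x₀)) = -chi k (h x) := fun x => by
      rw [hadd, chi_add (hbit x) (hbit x₀), (hbit x₀).resolve_left hx₀]
      simp [chi]
    have hshift := Equiv.sum_comp (Equiv.addRight x₀) fun x => chi k (h x)
    simp only [Equiv.coe_addRight, hflip, sum_neg_distrib] at hshift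
    linarith

theorem sum_chi_atr_mul (hk : k ≠ 0) (c : GF k) :
    ∑ x, chi k (atr k (x * c)) = if c = 0 then 2 ^ k else 0 := by
  rw [sum_chi_eq_ite hk _ (fun x y => by rw [add_mul, atr_add]) (fun x => atr_isBit hk _),
    if_congr (forall_atr_mul_eq_zero_iff hk) rfl rfl]

end Characters

section Walsh

variable {k : ℕ}

def autocorr (k : ℕ) (g : GF k → GF k) (u : GF k) : ℤ := ∑ x, chi k (g x + g (x + u))

theorem walsh_sq (hk : k ≠ 0) {g : GF k → GF k} (hg : ∀ x, IsBit (g x)) (ω : GF k) :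
    walsh k g ω ^ 2 = ∑ u, chi k (atr k (ω * u)) * autocorr k g u := by
  have hpair : ∀ x u, chi k (g x + atr k (ω * x)) * chi k (g (x + u) + atr k (ω * (x + u)))
      = chi k (atr k (ω * u)) * chi k (g x + g (x + u)) := fun x u => by
    have hb := fun y => (hg y).add (atr_isBit hk (ω * y))
    rw [← chi_add (hb x) (hb (x + u)), ← chi_add (atr_isBit hk _) ((hg x).add (hg (x + u))),
      mul_add, atr_add]
    congr 1
    linear_combination atr k (ω * x) * CharTwo.two_eq_zero (R := GF k)
  calc walsh k g ω ^ 2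
      = ∑ x, ∑ y, chi k (g x + atr k (ω * x)) * chi k (g y + atr k (ω * y)) := by
        rw [walsh, sq, sum_mul_sum]
    _ = ∑ x, ∑ u, chi k (atr k (ω * u)) * chi k (g x + g (x + u)) := by
        refine sum_congr rfl fun x _ => ?_
        rw [← Equiv.sum_comp (Equiv.addLeft x)]
        simp only [Equiv.coe_addLeft, hpair]
    _ = _ := by
        rw [sum_comm]
        simp only [autocorr, mul_sum]

theorem sum_sq_sum_chi_atr_mul (hk : k ≠ 0) (C : GF k → ℤ) :
    ∑ ω, (∑ u, chi k (atr k (ω * u)) * C u) ^ 2 = 2 ^ k * ∑ u, C u ^ 2 := by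
  have hchar : ∀ ω u v : GF k,
      chi k (atr k (ω * u)) * chi k (atr k (ω * v)) = chi k (atr k (ω * (u + v))) := by
    intro ω u v
    rw [mul_add, atr_add, chi_add (atr_isBit hk _) (atr_isBit hk _)]
  calc ∑ ω, (∑ u, chi k (atr k (ω * u)) * C u) ^ 2
      = ∑ u, ∑ v, C u * C v * ∑ ω, chi k (atr k (ω * (u + v))) := by
        simp only [sq, sum_mul_sum]
        rw [sum_comm]
        refine sum_congr rfl fun u _ => ?_
        rw [sum_comm]
        refine sum_congr rfl fun v _ => ?_
        rw [mul_sum]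
        refine sum_congr rfl fun ω _ => ?_
        rw [← hchar]
        ring
    _ = ∑ u, C u * C u * 2 ^ k := by
        refine sum_congr rfl fun u _ => ?_
        simp only [sum_chi_atr_mul hk, CharTwo.add_eq_zero, mul_ite, mul_zero, sum_ite_eq]
        simp
    _ = 2 ^ k * ∑ u, C u ^ 2 := by
        rw [mul_sum]
        exact sum_congr rfl fun u _ => by ring

end Walsh

section Quadratic

variable {k : ℕ}

def radical (D : GF k → GF k → GF k) : Finset (GF k) := univ.filter fun s => ∀ t, D s t = 0

structure IsQuadraticWithPolar (g : GF k → GF k) (D : GF k → GF k → GF k) : Prop where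
  isBit : ∀ x, IsBit (g x)
  second_diff : ∀ x s t, g x + g (x + s) + g (x + t) + g (x + s + t) = D s t
  polar_add : ∀ s t t', D s (t + t') = D s t + D s t'

theorem IsQuadraticWithPolar.autocorr_eq (hk : k ≠ 0) {g : GF k → GF k}
    {D : GF k → GF k → GF k} (hg : IsQuadraticWithPolar g D) (u : GF k) :
    autocorr k g u = chi k (g 0 + g u) * if u ∈ radical D then 2 ^ k else 0 := by
  have hDbit : ∀ t, IsBit (D u t) := fun t => hg.second_diff 0 u t ▸
    (((hg.isBit 0).add (hg.isBit _)).add (hg.isBit _)).add (hg.isBit _)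
  have hshift : ∀ x, g x + g (x + u) = g 0 + g u + D u x := fun x => by
    rw [← hg.second_diff 0 u x, zero_add, zero_add, add_comm u x]
    linear_combination -(g 0 + g u) * CharTwo.two_eq_zero (R := GF k)
  simp only [autocorr, hshift, chi_add ((hg.isBit 0).add (hg.isBit u)) (hDbit _), ← mul_sum,
    sum_chi_eq_ite hk _ (hg.polar_add u) hDbit, radical, mem_filter, mem_univ, true_and]

theorem IsQuadraticWithPolar.sum_walsh_pow_four (hk : k ≠ 0) {g : GF k → GF k}
    {D : GF k → GF k → GF k} (hg : IsQuadraticWithPolar g D) :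
    ∑ ω, walsh k g ω ^ 4 = (2 ^ k) ^ 3 * #(radical D) := by
  have hsq : ∀ u, autocorr k g u ^ 2 = if u ∈ radical D then (2 ^ k) ^ 2 else 0 := fun u => by
    rw [hg.autocorr_eq hk, mul_pow, sq (chi k _), chi_mul_self, one_mul]
    split_ifs <;> simp
  calc ∑ ω, walsh k g ω ^ 4 = ∑ ω, (∑ u, chi k (atr k (ω * u)) * autocorr k g u) ^ 2 := by
        simp only [← walsh_sq hk hg.isBit, ← pow_mul]
    _ = (2 ^ k) ^ 3 * #(radical D) := by
        rw [sum_sq_sum_chi_atr_mul hk, Finset.sum_congr rfl fun u _ => hsq u, sum_ite_mem,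
          univ_inter, sum_const, nsmul_eq_mul]
        ring

theorem IsQuadraticWithPolar.card_radical_eq_one_of_bent (hk : k ≠ 0) {g : GF k → GF k}
    {D : GF k → GF k → GF k} (hg : IsQuadraticWithPolar g D)
    (hbent : ∀ ω, walsh k g ω ^ 2 = 2 ^ k) : #(radical D) = 1 := by
  have hmoment := hg.sum_walsh_pow_four hk
  simp only [show ∀ ω, walsh k g ω ^ 4 = (2 ^ k) ^ 2 from fun ω => by rw [← hbent ω]; ring,
    sum_const, card_univ, card_GF hk, nsmul_eq_mul] at hmoment
  have : ((2 : ℤ) ^ k) ^ 3 * #(radical D) = (2 ^ k) ^ 3 * 1 := by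
    rw [← hmoment]; push_cast; ring
  exact_mod_cast mul_left_cancel₀ (by positivity) this

theorem sum_card_radical_atr_mul (hk : k ≠ 0) (B : GF k → GF k → GF k)
    (hB : ∀ s t t', B s (t + t') = B s t + B s t') :
    ∑ a, #(radical fun s t => atr k (a * B s t)) = ∑ s, #(univ.filter fun t => B s t = 0) := by
  have hcount : ∀ (p : GF k → Prop) [DecidablePred p],
      ∑ x, (if p x then (2 : ℤ) ^ k else 0) = 2 ^ k * #(univ.filter p) := fun p _ => by
    rw [← sum_filter, sum_const, nsmul_eq_mul, mul_comm]
  have hinner : ∀ a s, ∑ t, chi k (atr k (a * B s t))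
      = if ∀ t, atr k (a * B s t) = 0 then 2 ^ k else 0 := fun a s =>
    sum_chi_eq_ite hk _ (fun t t' => by rw [hB, mul_add, atr_add]) (fun t => atr_isBit hk _)
  have hdouble : (2 : ℤ) ^ k * ∑ a, (#(radical fun s t => atr k (a * B s t)) : ℤ)
      = 2 ^ k * ∑ s, (#(univ.filter fun t => B s t = 0) : ℤ) :=
    calc (2 : ℤ) ^ k * ∑ a, (#(radical fun s t => atr k (a * B s t)) : ℤ)
        = ∑ a, ∑ s, ∑ t, chi k (atr k (a * B s t)) := by
          simp only [mul_sum, hinner, hcount, radical]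
      _ = ∑ s, ∑ t, ∑ a, chi k (atr k (a * B s t)) := by
          rw [sum_comm]
          exact sum_congr rfl fun s _ => sum_comm
      _ = 2 ^ k * ∑ s, (#(univ.filter fun t => B s t = 0) : ℤ) := by
          simp only [mul_sum, sum_chi_atr_mul hk, hcount]
  exact_mod_cast mul_left_cancel₀ (by positivity) hdouble

end Quadratic

theorem second_diff_pow_two_pow_add_one {R : Type*} [CommRing R] [CharP R 2] (c : ℕ)
    (x s t : R) :
    x ^ (2 ^ c + 1) + (x + s) ^ (2 ^ c + 1) + (x + t) ^ (2 ^ c + 1) + (x + s + t) ^ (2 ^ c + 1)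
      = s ^ 2 ^ c * t + s * t ^ 2 ^ c := by
  simp only [pow_succ _ (2 ^ c), add_pow_char_pow]
  linear_combination (2 * x ^ 2 ^ c * x + x ^ 2 ^ c * s + s ^ 2 ^ c * x + s ^ 2 ^ c * s
    + x ^ 2 ^ c * t + t ^ 2 ^ c * x + t ^ 2 ^ c * t) * CharTwo.two_eq_zero (R := R)

theorem three_mul_card_sub_two_le_sum_card {α β : Type*} [Fintype α] [Zero α]
    [Zero β] [DecidableEq β] (B : α → α → β) (hB0 : ∀ t, B 0 t = 0) (hBs0 : ∀ s, B s 0 = 0)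
    (hBss : ∀ s, B s s = 0) :
    3 * Fintype.card α - 2 ≤ ∑ s, #(univ.filter fun t => B s t = 0) := by
  have hzero : #(univ.filter fun t => B 0 t = 0) = Fintype.card α := by simp [hB0]
  have hpair : ∀ s ∈ univ.erase (0 : α), 2 ≤ #(univ.filter fun t => B s t = 0) := fun s hs => by
    rw [← card_pair (ne_of_mem_erase hs).symm]
    exact card_le_card fun t ht => by
      rcases mem_insert.mp ht with rfl | ht
      · simp [hBs0]
      · simp [mem_singleton.mp ht, hBss]
  have hrest := card_nsmul_le_sum _ _ 2 hpair
  rw [card_erase_of_mem (mem_univ _), card_univ, smul_eq_mul] at hrest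
  rw [← add_sum_erase _ _ (mem_univ 0), hzero]
  omega

section Polar

variable {k : ℕ}

def polar (e f : ℕ) (s t : GF k) : GF k :=
  s ^ 2 ^ e * t + s * t ^ 2 ^ e + s ^ 2 ^ f * t + s * t ^ 2 ^ f

theorem polar_add_right (e f : ℕ) (s t t' : GF k) :
    polar e f s (t + t') = polar e f s t + polar e f s t' := by
  simp only [polar, add_pow_char_pow]
  ring

theorem polar_zero_left (e f : ℕ) (t : GF k) : polar e f 0 t = 0 := by
  simp [polar]

theorem polar_zero_right (e f : ℕ) (s : GF k) : polar e f s 0 = 0 := by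
  simp [polar]

theorem polar_self (e f : ℕ) (s : GF k) : polar e f s s = 0 := by
  simp only [polar]
  linear_combination (s ^ 2 ^ e * s + s ^ 2 ^ f * s) * CharTwo.two_eq_zero (R := GF k)

theorem atr_second_diff_eq_polar (e f : ℕ) (a x s t : GF k) :
    atr k (a * (x ^ (2 ^ e + 1) + x ^ (2 ^ f + 1)))
      + atr k (a * ((x + s) ^ (2 ^ e + 1) + (x + s) ^ (2 ^ f + 1)))
      + atr k (a * ((x + t) ^ (2 ^ e + 1) + (x + t) ^ (2 ^ f + 1)))
      + atr k (a * ((x + s + t) ^ (2 ^ e + 1) + (x + s + t) ^ (2 ^ f + 1)))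
      = atr k (a * polar e f s t) := by
  simp only [← atr_add, polar]
  congr 1
  linear_combination a * second_diff_pow_two_pow_add_one e x s t
    + a * second_diff_pow_two_pow_add_one f x s t

def componentRadical (e f : ℕ) (a : GF k) : Finset (GF k) :=
  radical fun s t => atr k (a * polar e f s t)

theorem isQuadraticWithPolar_component (hk : k ≠ 0) (e f : ℕ) (a : GF k) :
    IsQuadraticWithPolar (fun x => atr k (a * (x ^ (2 ^ e + 1) + x ^ (2 ^ f + 1))))
      (fun s t => atr k (a * polar e f s t)) where
  isBit _ := atr_isBit hk _
  second_diff := atr_second_diff_eq_polar e f a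
  polar_add s t t' := by rw [polar_add_right, mul_add, atr_add]

theorem card_componentRadical_eq_one_of_bent (hk : k ≠ 0) (e f : ℕ) (a : GF k)
    (hbent : ∀ ω, walsh k (fun x => atr k (a * (x ^ (2 ^ e + 1) + x ^ (2 ^ f + 1)))) ω ^ 2
      = 2 ^ k) :
    #(componentRadical e f a) = 1 :=
  (isQuadraticWithPolar_component hk e f a).card_radical_eq_one_of_bent hk hbent

theorem card_componentRadical_zero (hk : k ≠ 0) (e f : ℕ) :
    #(componentRadical e f (0 : GF k)) = 2 ^ k := by
  simp [componentRadical, radical, atr_zero, card_GF hk]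

theorem three_mul_sub_two_le_sum_card_componentRadical (hk : k ≠ 0) (e f : ℕ) :
    3 * 2 ^ k - 2 ≤ ∑ a : GF k, #(componentRadical e f a) := by
  unfold componentRadical
  rw [sum_card_radical_atr_mul hk _ (polar_add_right e f), ← card_GF hk]
  exact three_mul_card_sub_two_le_sum_card _ (polar_zero_left e f) (polar_zero_right e f)
    (polar_self e f)

end Polar

open Polynomial in
theorem card_le_of_forall_trinomial_eq_zero {K : Type*} [Field K] {Z : Finset K} {c b b' : K}
    {d e N : ℕ} (hc : c ≠ 0) (hde : d ≠ e) (hd : 1 < d) (hdN : d ≤ N) (heN : e ≤ N)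
    (hZ : ∀ s ∈ Z, c * s ^ d + b * s ^ e + b' * s = 0) : #Z ≤ N := by
  set p : K[X] := C c * X ^ d + C b * X ^ e + C b' * X
  have hp : p ≠ 0 := fun h => hc <| by
    simpa [p, coeff_X, coeff_X_pow, hde, hd.ne, hd.ne'] using congrArg (coeff · d) h
  calc #Z ≤ p.natDegree := card_le_degree_of_subset_roots fun s hs => by
        simpa [mem_roots hp, p] using hZ s hs
    _ ≤ N := by
        refine natDegree_add_le_of_degree_le (natDegree_add_le_of_degree_le ?_ ?_) ?_
        · exact (natDegree_C_mul_X_pow_le c d).trans hdN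
        · exact (natDegree_C_mul_X_pow_le b e).trans heN
        · exact (natDegree_C_mul_le b' X).trans (natDegree_X_le.trans (by omega))

section Radical

variable {m i j : ℕ}

-- `j` stands for `m - i`, keeping truncated subtraction out of the exponents.
def radicalMap (m i j : ℕ) (a s : GF (2 * m)) : GF (2 * m) :=
  (a + a ^ 2 ^ m) * s ^ 2 ^ m + a ^ 2 ^ (m + j) * s ^ 2 ^ (m + j) + a * s ^ 2 ^ i

theorem atr_mul_polar_eq (hm : m ≠ 0) (hij : i + j = m) (a s t : GF (2 * m)) :
    atr (2 * m) (a * polar m i s t) = atr (2 * m) (t * radicalMap m i j a s) := by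
  have hk : 2 * m ≠ 0 := by omega
  have hq : atr (2 * m) (a * (s * t ^ 2 ^ m)) = atr (2 * m) (a ^ 2 ^ m * s ^ 2 ^ m * t) := by
    rw [← atr_pow_two_pow hk _ m, mul_pow, mul_pow,
      pow_two_pow_pow_two_pow_self hk (show m + m = 2 * m by omega), mul_assoc]
  have hi : atr (2 * m) (a * (s * t ^ 2 ^ i))
      = atr (2 * m) (a ^ 2 ^ (m + j) * s ^ 2 ^ (m + j) * t) := by
    rw [← atr_pow_two_pow hk _ (m + j), mul_pow, mul_pow,
      pow_two_pow_pow_two_pow_self hk (show i + (m + j) = 2 * m by omega), mul_assoc]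
  calc atr (2 * m) (a * polar m i s t)
      = atr (2 * m) (a * (s ^ 2 ^ m * t)) + atr (2 * m) (a * (s * t ^ 2 ^ m))
        + atr (2 * m) (a * (s ^ 2 ^ i * t)) + atr (2 * m) (a * (s * t ^ 2 ^ i)) := by
        simp only [← atr_add, polar]
        congr 1
        ring
    _ = atr (2 * m) (t * radicalMap m i j a s) := by
        rw [hq, hi]
        simp only [← atr_add, radicalMap]
        congr 1
        ring

theorem radical_atr_mul_polar (hm : m ≠ 0) (hij : i + j = m) (a : GF (2 * m)) :
    radical (fun s t => atr (2 * m) (a * polar m i s t))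
      = univ.filter fun s => radicalMap m i j a s = 0 := by
  ext s
  simp [radical, atr_mul_polar_eq hm hij, forall_atr_mul_eq_zero_iff (show 2 * m ≠ 0 by omega)]

theorem radicalMap_pow_two_pow (hm : m ≠ 0) (hij : i + j = m) (a s : GF (2 * m)) :
    radicalMap m i j a s ^ 2 ^ (m + j) = a ^ 2 ^ (2 * j) * s ^ 2 ^ (2 * j)
      + (a + a ^ 2 ^ m) ^ 2 ^ (m + j) * s ^ 2 ^ j + a ^ 2 ^ (m + j) * s := by
  have hk : 2 * m ≠ 0 := by omega
  rw [radicalMap, add_pow_char_pow, add_pow_char_pow, mul_pow, mul_pow, mul_pow,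
    pow_two_pow_pow_two_pow hk (show m + (m + j) = 2 * m + j by omega) s,
    pow_two_pow_pow_two_pow hk (show m + j + (m + j) = 2 * m + 2 * j by omega) a,
    pow_two_pow_pow_two_pow hk (show m + j + (m + j) = 2 * m + 2 * j by omega) s,
    pow_two_pow_pow_two_pow_self hk (show i + (m + j) = 2 * m by omega) s]
  ring

-- The coefficients make the `s ^ 2 ^ (m + i)` terms of the two twists cancel.
theorem radicalMap_frobenius_combination (hm : m ≠ 0) (hij : i + j = m) (a s : GF (2 * m)) :
    (a + a ^ 2 ^ m) ^ 2 ^ i * radicalMap m i j a s ^ 2 ^ m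
        + a ^ 2 ^ m * radicalMap m i j a s ^ 2 ^ i
      = a ^ 2 ^ m * a ^ 2 ^ i * s ^ 2 ^ (2 * i) + (a + a ^ 2 ^ m) ^ 2 ^ i * a ^ 2 ^ j * s ^ 2 ^ j
        + ((a + a ^ 2 ^ m) ^ 2 ^ i * (a + a ^ 2 ^ m) + a ^ 2 ^ m * a) * s := by
  have hk : 2 * m ≠ 0 := by omega
  set A := a + a ^ 2 ^ m with hA
  have hAq : A ^ 2 ^ m = A := by
    rw [hA, add_pow_char_pow, pow_two_pow_pow_two_pow_self hk (show m + m = 2 * m by omega),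
      add_comm]
  have hq : radicalMap m i j a s ^ 2 ^ m
      = A * s + a ^ 2 ^ j * s ^ 2 ^ j + a ^ 2 ^ m * (s ^ 2 ^ i) ^ 2 ^ m := by
    rw [radicalMap, add_pow_char_pow, add_pow_char_pow, mul_pow, mul_pow, mul_pow, ← hA, hAq,
      pow_two_pow_pow_two_pow_self hk (show m + m = 2 * m by omega) s,
      pow_two_pow_pow_two_pow hk (show m + j + m = 2 * m + j by omega) a,
      pow_two_pow_pow_two_pow hk (show m + j + m = 2 * m + j by omega) s]
  have hi : radicalMap m i j a s ^ 2 ^ i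
      = A ^ 2 ^ i * (s ^ 2 ^ m) ^ 2 ^ i + a * s + a ^ 2 ^ i * (s ^ 2 ^ i) ^ 2 ^ i := by
    rw [radicalMap, add_pow_char_pow, add_pow_char_pow, mul_pow, mul_pow, mul_pow, ← hA,
      pow_two_pow_pow_two_pow_self hk (show m + j + i = 2 * m by omega) a,
      pow_two_pow_pow_two_pow_self hk (show m + j + i = 2 * m by omega) s]
  rw [hq, hi]
  linear_combination
    A ^ 2 ^ i * a ^ 2 ^ m * (s ^ 2 ^ i) ^ 2 ^ m * CharTwo.two_eq_zero (R := GF (2 * m))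

theorem card_componentRadical_le (hi : 1 ≤ i) (hj : 1 ≤ j) (hij : i + j = m)
    (h3 : m ≠ 3 * i) {a : GF (2 * m)} (ha : a ≠ 0) : #(componentRadical m i a) ≤ 2 ^ m := by
  have hm : m ≠ 0 := by omega
  have hpow_ne : ∀ {b c : ℕ}, b ≠ c → 2 ^ b ≠ 2 ^ c := fun h e =>
    h (Nat.pow_right_injective le_rfl e)
  rw [componentRadical, radical_atr_mul_polar hm hij]
  rcases le_or_gt (2 * j) m with hjm | him
  · exact card_le_of_forall_trinomial_eq_zero (pow_ne_zero _ ha) (hpow_ne (by omega))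
      (Nat.one_lt_two_pow (by omega)) (Nat.pow_le_pow_right two_pos hjm)
      (Nat.pow_le_pow_right two_pos (by omega)) fun s hs =>
        (radicalMap_pow_two_pow hm hij a s).symm.trans
          (by rw [(mem_filter.mp hs).2, zero_pow (by positivity)])
  · exact card_le_of_forall_trinomial_eq_zero
      (mul_ne_zero (pow_ne_zero _ ha) (pow_ne_zero _ ha)) (hpow_ne (by omega))
      (Nat.one_lt_two_pow (by omega)) (Nat.pow_le_pow_right two_pos (by omega))
      (Nat.pow_le_pow_right two_pos (by omega)) fun s hs =>
        (radicalMap_frobenius_combination hm hij a s).symm.trans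
          (by simp [(mem_filter.mp hs).2])

end Radical

theorem ne_three_mul_of_padicValNat_lt {m i : ℕ} (hi : i ≠ 0)
    (hv : padicValNat 2 i < padicValNat 2 m) : m ≠ 3 * i := by
  rintro rfl
  rw [padicValNat.mul three_ne_zero hi,
    padicValNat.eq_zero_of_not_dvd (show ¬2 ∣ 3 by norm_num)] at hv
  omega

theorem Finset.sum_le_card_add_card_sdiff_mul {ι : Type*} [DecidableEq ι] {s t : Finset ι}
    (hts : t ⊆ s) (f : ι → ℕ) {M : ℕ} (ht : ∀ a ∈ t, f a ≤ 1) (hM : ∀ a ∈ s \ t, f a ≤ M) :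
    ∑ a ∈ s, f a ≤ #t + #(s \ t) * M := by
  rw [← sum_sdiff hts, add_comm]
  exact add_le_add ((sum_le_card_nsmul t f 1 ht).trans_eq (by simp))
    ((sum_le_card_nsmul _ f M hM).trans_eq (smul_eq_mul _ _))

theorem three_mul_sq_sub_two_gt {M : ℕ} (hM : 2 ≤ M) :
    M * M + ((M * M - M) + (M * M - 1 - (M * M - M)) * M) < 3 * (M * M) - 2 := by
  have hMM : M ≤ M * M := Nat.le_mul_of_pos_left _ (by omega)
  rw [show M * M - 1 - (M * M - M) = M - 1 by omega, Nat.sub_one_mul]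
  omega

/-- if `1 ≤ i ≤ m−1` and `v₂(i) < v₂(m)` then
`F(x) = x^(2^m+1) + x^(2^i+1)` does not have `2^n − 2^m` bent components. -/
theorem stmt15 (m : ℕ) (i : ℕ) (hi1 : 1 ≤ i) (hi2 : i ≤ m - 1)
    (hv : padicValNat 2 i < padicValNat 2 m) :
    (Finset.univ.filter (fun a : GF (2*m) => a ≠ 0 ∧
        ∀ ω : GF (2*m),
          (walsh (2*m)
            (fun x => atr (2*m) (a * (x ^ (2 ^ m + 1) + x ^ (2 ^ i + 1)))) ω) ^ 2
            = 2 ^ (2*m))).card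
      ≠ 2 ^ (2*m) - 2 ^ m := by
  set S := Finset.univ.filter (fun a : GF (2*m) => a ≠ 0 ∧ ∀ ω : GF (2*m),
    (walsh (2*m) (fun x => atr (2*m) (a * (x ^ (2 ^ m + 1) + x ^ (2 ^ i + 1)))) ω) ^ 2
      = 2 ^ (2*m))
  intro hcard
  have hk : 2 * m ≠ 0 := by omega
  have hSsub : S ⊆ univ.erase 0 := fun a ha =>
    mem_erase.mpr ⟨(mem_filter.mp ha).2.1, mem_univ a⟩
  have hlower := three_mul_sub_two_le_sum_card_componentRadical hk m i
  have hupper := sum_le_card_add_card_sdiff_mul hSsub (fun a => #(componentRadical m i a))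
    (fun a ha => (card_componentRadical_eq_one_of_bent hk m i a (mem_filter.mp ha).2.2).le)
    (fun a ha => card_componentRadical_le hi1 (by omega) (by omega : i + (m - i) = m)
      (ne_three_mul_of_padicValNat_lt (by omega) hv) (ne_of_mem_erase (mem_sdiff.mp ha).1))
  rw [← add_sum_erase _ _ (mem_univ 0), card_componentRadical_zero hk] at hlower
  rw [card_sdiff_of_subset hSsub, card_erase_of_mem (mem_univ _), card_univ, card_GF hk,
    hcard] at hupper
  have hgap := three_mul_sq_sub_two_gt (Nat.le_self_pow (by omega : m ≠ 0) 2)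
  rw [← pow_add, ← two_mul] at hgap
  omega
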